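/- (Tuning of a GNN.) Let A be a GNN with sum aggregation, combination functions σ(xC^(t)+yA^(t)+b^(t)) with all-integer weights, and linear classification with integer coefficients, and let φ be any K^# formula. Then there exists a GNN A' (of the same kind) such that A' accepts a pointed graph (G,u) if and only if A accepts (G,u) and (G,u) satisfies φ. -/

import Mathlib

open scoped Classical

/-- A finite labeled directed graph: edges and a valuation of atomic
propositions (indexed by `ℕ`) at each vertex. -/
structure LGraph (V : Type) [Fintype V] where
  edge : V → V → Bool
  label : V → ℕ → Bool

mutual
/-- Formulas of the logic `K^#`. -/
inductive KForm : Type where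
  | atom : ℕ → KForm
  | not : KForm → KForm
  | or : KForm → KForm → KForm
  | ge0 : KExpr → KForm
/-- Expressions of the logic `K^#`. -/
inductive KExpr : Type where
  | const : ℤ → KExpr
  | ind : KForm → KExpr
  | count : KForm → KExpr
  | add : KExpr → KExpr → KExpr
  | scale : ℤ → KExpr → KExpr
end

mutual
/-- Truth of a `K^#` formula at a pointed graph. -/
def KForm.sat {V : Type} [Fintype V] (G : LGraph V) (u : V) : KForm → Bool
  | .atom p => G.label u p
  | .not φ => !(KForm.sat G u φ)
  | .or φ ψ => KForm.sat G u φ || KForm.sat G u ψ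
  | .ge0 E => decide (0 ≤ KExpr.val G u E)
/-- Value of a `K^#` expression at a pointed graph. -/
def KExpr.val {V : Type} [Fintype V] (G : LGraph V) (u : V) : KExpr → ℤ
  | .const c => c
  | .ind φ => if KForm.sat G u φ then 1 else 0
  | .count φ =>
      ((Finset.univ.filter (fun v => G.edge u v = true ∧ KForm.sat G v φ = true)).card : ℤ)
  | .add E₁ E₂ => KExpr.val G u E₁ + KExpr.val G u E₂
  | .scale c E => c * KExpr.val G u E
end

/-- The clipped (truncated) ReLU `σ(x) = min(max(0,x),1)`. -/
def clip (x : ℝ) : ℝ := min (max 0 x) 1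

/-- A sum-aggregation GNN: dimension `d`, number `k ≤ d` of input propositions,
`L` layers, each layer `t` given by integer matrices `C t`, `A t` and an integer
bias vector `b t` (the combination function being `σ(xC + yA + b)` where `y` is
the sum of the states of the successors), and a classification function `cls`. -/
structure GNN where
  d : ℕ
  k : ℕ
  hk : k ≤ d
  L : ℕ
  C : ℕ → Matrix (Fin d) (Fin d) ℤ
  A : ℕ → Matrix (Fin d) (Fin d) ℤ
  b : ℕ → Fin d → ℤ
  cls : (Fin d → ℝ) → Bool

/-- The state of the GNN after `t` layers: the initial state lists the truth values
of the atomic propositions `p_0, …, p_{k-1}` padded with zeros, and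
`x_{t+1}(u) = σ(x_t(u)·C + (Σ_{(u,v)∈E} x_t(v))·A + b)`. -/
noncomputable def GNN.state (N : GNN) {V : Type} [Fintype V] (G : LGraph V) :
    ℕ → V → Fin N.d → ℝ
  | 0 => fun u i => if i.val < N.k ∧ G.label u i.val = true then 1 else 0
  | t + 1 => fun u i =>
      clip ((∑ j, N.state G t u j * (N.C t j i : ℝ))
        + (∑ j, (∑ v ∈ Finset.univ.filter (fun v => G.edge u v = true), N.state G t v j)
            * (N.A t j i : ℝ))
        + (N.b t i : ℝ))

/-- The GNN accepts a pointed graph iff the classification function returns 1 (true)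
on the final state. -/
def GNN.accepts (N : GNN) {V : Type} [Fintype V] (G : LGraph V) (u : V) : Prop :=
  N.cls (N.state G N.L u) = true

/-! The tuned network runs three blocks of coordinates side by side: the input labels, a copy
of `N` (started one layer late, after copying its inputs, and followed by identity layers, which
`clip` leaves unchanged on `[0,1]`), and one coordinate for every subformula `ψ` of `¬φ`.
Each connective of `K^#` is an integer threshold gate: `ψ` holds iff `0 ≤ ℓ(ψ) + θ(ψ)`, where
`ℓ(ψ)` is the label of an atom and `θ(ψ)` an integer combination of `1`, `1_χ` and `#χ` for
immediate subformulas `χ`. As `clip (z + 1) = [0 ≤ z]` for integers `z`, the coordinate of `ψ`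
holds `[ψ]` from layer `depth ψ` on. Finally `M = 1 + Σ |aⱼ|` exceeds `a · x` on `[0,1]^d`,
so the classifier `a · x - M·[¬φ] ≥ 0` accepts iff `N` accepts and `φ` holds. -/

lemma clip_of_mem {x : ℝ} (h0 : 0 ≤ x) (h1 : x ≤ 1) : clip x = x := by
  simp [clip, max_eq_right h0, min_eq_left h1]

lemma clip_intCast_add_one (z : ℤ) : clip (z + 1) = if 0 ≤ z then 1 else 0 := by
  unfold clip
  split_ifs with hz
  · have : (0 : ℝ) ≤ z := Int.cast_nonneg hz
    simp [max_eq_right (by linarith : (0 : ℝ) ≤ z + 1), this]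
  · have : (z : ℝ) + 1 ≤ 0 := by
      have : (z : ℝ) ≤ -1 := by exact_mod_cast (by omega : z ≤ -1)
      linarith
    simp [max_eq_left this]

lemma sub_mul_ite_nonneg_iff {s M : ℝ} (hs : s < M) (b : Bool) :
    0 ≤ s - M * (if b then 0 else 1) ↔ 0 ≤ s ∧ b = true := by
  cases b
  · simpa using hs
  · simp

namespace GNN

lemma state_mem_Icc (N : GNN) {V : Type} [Fintype V] (G : LGraph V) (t : ℕ) (u : V)
    (i : Fin N.d) : N.state G t u i ∈ Set.Icc 0 1 := by
  cases t with
  | zero => simp only [state]; split <;> norm_num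
  | succ t => exact ⟨le_min (le_max_left _ _) zero_le_one, min_le_right _ _⟩

noncomputable abbrev freeze (N : GNN) : GNN :=
  { N with
    C := fun t => if t < N.L then N.C t else 1
    A := fun t => if t < N.L then N.A t else 0
    b := fun t => if t < N.L then N.b t else 0 }

lemma state_freeze (N : GNN) {V : Type} [Fintype V] (G : LGraph V) (t : ℕ) :
    N.freeze.state G t = N.state G (min t N.L) := by
  induction t with
  | zero => rfl
  | succ t ih =>
    funext u i
    rw [state, ih]
    by_cases ht : t < N.L
    · rw [min_eq_left (by omega : t + 1 ≤ N.L), min_eq_left ht.le]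
      simp only [ht, if_true]
      rfl
    · rw [min_eq_right (by omega : N.L ≤ t + 1), min_eq_right (not_lt.mp ht)]
      have hi := N.state_mem_Icc G N.L u i
      simp [ht, Matrix.one_apply, clip_of_mem hi.1 hi.2]

end GNN

section OfSum

variable {R : Type} [Fintype R]

/-- The input coordinates `Fin k` come first, so that they receive the labels at layer `0`. -/
noncomputable def sumFinEquiv (k : ℕ) (R : Type) [Fintype R] :
    Fin k ⊕ R ≃ Fin (k + Fintype.card R) :=
  (Equiv.sumCongr (Equiv.refl _) (Fintype.equivFin R)).trans finSumFinEquiv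

noncomputable abbrev GNN.ofSum (k L : ℕ) (C A : ℕ → Fin k ⊕ R → Fin k ⊕ R → ℤ)
    (b : ℕ → Fin k ⊕ R → ℤ) (w : Fin k ⊕ R → ℤ) : GNN where
  d := k + Fintype.card R
  k := k
  hk := Nat.le_add_right _ _
  L := L
  C t := Matrix.of fun i j => C t ((sumFinEquiv k R).symm i) ((sumFinEquiv k R).symm j)
  A t := Matrix.of fun i j => A t ((sumFinEquiv k R).symm i) ((sumFinEquiv k R).symm j)
  b t i := b t ((sumFinEquiv k R).symm i)
  cls x := decide (0 ≤ ∑ i, (w ((sumFinEquiv k R).symm i) : ℝ) * x i)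

namespace GNN

variable {k L : ℕ} {C A : ℕ → Fin k ⊕ R → Fin k ⊕ R → ℤ} {b : ℕ → Fin k ⊕ R → ℤ}
  {w : Fin k ⊕ R → ℤ} {V : Type} [Fintype V] (G : LGraph V)

lemma ofSum_state_zero (u : V) (ι : Fin k ⊕ R) :
    (ofSum k L C A b w).state G 0 u (sumFinEquiv k R ι) =
      Sum.elim (fun i : Fin k => if G.label u i then 1 else 0) 0 ι := by
  rcases ι with i | r <;> simp [state, sumFinEquiv]

lemma ofSum_state_succ (t : ℕ) (u : V) (ι : Fin k ⊕ R) :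
    (ofSum k L C A b w).state G (t + 1) u (sumFinEquiv k R ι) =
      clip (∑ κ, (ofSum k L C A b w).state G t u (sumFinEquiv k R κ) * (C t κ ι : ℝ)
        + ∑ κ, (∑ v ∈ Finset.univ.filter (fun v => G.edge u v = true),
            (ofSum k L C A b w).state G t v (sumFinEquiv k R κ)) * (A t κ ι : ℝ)
        + (b t ι : ℝ)) := by
  rw [state]
  refine congrArg clip (congrArg₂ (· + ·) (congrArg₂ (· + ·) ?_ ?_) ?_)
  · exact Fintype.sum_equiv (sumFinEquiv k R).symm _ _ (fun i => by simp)
  · exact Fintype.sum_equiv (sumFinEquiv k R).symm _ _ (fun i => by simp)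
  · simp

lemma accepts_ofSum_iff (u : V) :
    (ofSum k L C A b w).accepts G u ↔
      0 ≤ ∑ ι, (w ι : ℝ) * (ofSum k L C A b w).state G L u (sumFinEquiv k R ι) := by
  simp only [accepts, decide_eq_true_iff]
  exact iff_of_eq (congrArg _ (Fintype.sum_equiv (sumFinEquiv k R).symm _ _ (fun i => by simp)))

end GNN

end OfSum

mutual
noncomputable def KForm.subformulas : KForm → Finset KForm
  | .atom p => {.atom p}
  | .not ψ => insert (.not ψ) ψ.subformulas
  | .or ψ χ => insert (.or ψ χ) (ψ.subformulas ∪ χ.subformulas)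
  | .ge0 E => insert (.ge0 E) E.subformulas
noncomputable def KExpr.subformulas : KExpr → Finset KForm
  | .const _ => ∅
  | .ind ψ => ψ.subformulas
  | .count ψ => ψ.subformulas
  | .add E F => E.subformulas ∪ F.subformulas
  | .scale _ E => E.subformulas
end

mutual
def KForm.depth : KForm → ℕ
  | .atom _ => 1
  | .not ψ => ψ.depth + 1
  | .or ψ χ => max ψ.depth χ.depth + 1
  | .ge0 E => E.depth + 1
def KExpr.depth : KExpr → ℕ
  | .const _ => 0
  | .ind ψ => ψ.depth
  | .count ψ => ψ.depth
  | .add E F => max E.depth F.depth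
  | .scale _ E => E.depth
end

lemma KForm.mem_subformulas_self (ψ : KForm) : ψ ∈ ψ.subformulas := by
  cases ψ <;> simp [KForm.subformulas]

mutual
lemma KForm.subformulas_subset_of_mem : ∀ {ψ ρ : KForm},
    ψ ∈ ρ.subformulas → ψ.subformulas ⊆ ρ.subformulas
  | _, .atom p, h => by simp_all [KForm.subformulas]
  | _, .not ρ, h => by
    simp only [KForm.subformulas, Finset.mem_insert] at h ⊢
    rcases h with rfl | h
    · exact subset_rfl
    · exact (KForm.subformulas_subset_of_mem h).trans (Finset.subset_insert _ _)
  | _, .or ρ ρ', h => by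
    simp only [KForm.subformulas, Finset.mem_insert, Finset.mem_union] at h ⊢
    rcases h with rfl | h | h
    · exact subset_rfl
    · exact (KForm.subformulas_subset_of_mem h).trans
        (Finset.subset_union_left.trans (Finset.subset_insert _ _))
    · exact (KForm.subformulas_subset_of_mem h).trans
        (Finset.subset_union_right.trans (Finset.subset_insert _ _))
  | _, .ge0 E, h => by
    simp only [KForm.subformulas, Finset.mem_insert] at h ⊢
    rcases h with rfl | h
    · exact subset_rfl
    · exact (KExpr.subformulas_subset_of_mem h).trans (Finset.subset_insert _ _)
lemma KExpr.subformulas_subset_of_mem : ∀ {ψ : KForm} {E : KExpr},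
    ψ ∈ E.subformulas → ψ.subformulas ⊆ E.subformulas
  | _, .const _, h => by simp [KExpr.subformulas] at h
  | _, .ind _, h => KForm.subformulas_subset_of_mem h
  | _, .count _, h => KForm.subformulas_subset_of_mem h
  | _, .add E F, h => by
    simp only [KExpr.subformulas, Finset.mem_union] at h ⊢
    rcases h with h | h
    · exact (KExpr.subformulas_subset_of_mem h).trans Finset.subset_union_left
    · exact (KExpr.subformulas_subset_of_mem h).trans Finset.subset_union_right
  | _, .scale _ E, h => KExpr.subformulas_subset_of_mem (E := E) h
end

lemma Finset.sum_mul_intCast_ite_eq {α : Type*} [DecidableEq α] {S : Finset α} (x : S → ℝ)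
    {a : α} (ha : a ∈ S) :
    ∑ χ : S, x χ * ((if a = χ.1 then 1 else 0 : ℤ) : ℝ) = x ⟨a, ha⟩ := by
  rw [Fintype.sum_eq_single ⟨a, ha⟩ (fun χ hχ => by
    rw [if_neg (fun h => hχ (Subtype.ext h.symm)), Int.cast_zero, mul_zero])]
  simp

namespace KExpr

noncomputable def forms : KExpr → Finset KForm
  | .const _ => ∅
  | .ind ψ => {ψ}
  | .count ψ => {ψ}
  | .add E F => E.forms ∪ F.forms
  | .scale _ E => E.forms

noncomputable def indCoef : KExpr → KForm → ℤ
  | .const _, _ => 0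
  | .ind χ, ψ => if χ = ψ then 1 else 0
  | .count _, _ => 0
  | .add E F, ψ => E.indCoef ψ + F.indCoef ψ
  | .scale c E, ψ => c * E.indCoef ψ

noncomputable def countCoef : KExpr → KForm → ℤ
  | .const _, _ => 0
  | .ind _, _ => 0
  | .count χ, ψ => if χ = ψ then 1 else 0
  | .add E F, ψ => E.countCoef ψ + F.countCoef ψ
  | .scale c E, ψ => c * E.countCoef ψ

def constCoef : KExpr → ℤ
  | .const c => c
  | .ind _ => 0
  | .count _ => 0
  | .add E F => E.constCoef + F.constCoef
  | .scale c E => c * E.constCoef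

lemma forms_subset_subformulas : ∀ E : KExpr, E.forms ⊆ E.subformulas
  | .const _ => by simp [forms]
  | .ind ψ => by simpa [forms, subformulas] using ψ.mem_subformulas_self
  | .count ψ => by simpa [forms, subformulas] using ψ.mem_subformulas_self
  | .add E F => Finset.union_subset_union E.forms_subset_subformulas F.forms_subset_subformulas
  | .scale _ E => E.forms_subset_subformulas

lemma depth_le_of_mem_forms : ∀ {E : KExpr} {ψ : KForm}, ψ ∈ E.forms → ψ.depth ≤ E.depth
  | .const _, _, h => by simp [forms] at h
  | .ind _, _, h => by simp_all [forms, depth]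
  | .count _, _, h => by simp_all [forms, depth]
  | .add E F, _, h => by
    rcases Finset.mem_union.mp h with h | h
    · exact (depth_le_of_mem_forms h).trans (le_max_left _ _)
    · exact (depth_le_of_mem_forms h).trans (le_max_right _ _)
  | .scale _ E, _, h => depth_le_of_mem_forms (E := E) h

variable {V : Type} [Fintype V] (G : LGraph V) (u : V)

lemma sum_linear_eq_val : ∀ (E : KExpr) {S : Finset KForm}, E.forms ⊆ S → ∀ (x y : S → ℝ),
    (∀ χ : S, χ.1 ∈ E.forms → x χ = if χ.1.sat G u then 1 else 0) →
    (∀ χ : S, χ.1 ∈ E.forms →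
      y χ = ((Finset.univ.filter (fun v => G.edge u v = true ∧ χ.1.sat G v = true)).card : ℝ)) →
    ∑ χ, x χ * (E.indCoef χ : ℝ) + ∑ χ, y χ * (E.countCoef χ : ℝ) + E.constCoef = E.val G u
  | .const c, _, _, x, y, _, _ => by simp [indCoef, countCoef, constCoef, val]
  | .ind ψ, S, hS, x, y, hx, _ => by
    have hψ : ψ ∈ S := hS (by simp [forms])
    simp only [indCoef, countCoef, constCoef, Finset.sum_mul_intCast_ite_eq x hψ,
      hx ⟨ψ, hψ⟩ (by simp [forms])]
    simp [val]
  | .count ψ, S, hS, x, y, _, hy => by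
    have hψ : ψ ∈ S := hS (by simp [forms])
    simp only [indCoef, countCoef, constCoef, Finset.sum_mul_intCast_ite_eq y hψ,
      hy ⟨ψ, hψ⟩ (by simp [forms])]
    simp [val]
  | .add E F, S, hS, x, y, hx, hy => by
    have hE := sum_linear_eq_val E (Finset.subset_union_left.trans hS) x y
      (fun χ h => hx χ (Finset.mem_union_left _ h)) (fun χ h => hy χ (Finset.mem_union_left _ h))
    have hF := sum_linear_eq_val F (Finset.subset_union_right.trans hS) x y
      (fun χ h => hx χ (Finset.mem_union_right _ h)) (fun χ h => hy χ (Finset.mem_union_right _ h))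
    simp only [indCoef, countCoef, constCoef, val, Int.cast_add, mul_add,
      Finset.sum_add_distrib] at hE hF ⊢
    linarith
  | .scale c E, S, hS, x, y, hx, hy => by
    simp only [indCoef, countCoef, constCoef, val, Int.cast_mul,
      ← sum_linear_eq_val E hS x y hx hy, mul_add, Finset.mul_sum, mul_left_comm (c : ℝ)]

end KExpr

namespace KForm

def threshold : KForm → KExpr
  | .atom _ => .const (-1)
  | .not ψ => .scale (-1) (.ind ψ)
  | .or ψ χ => .add (.add (.ind ψ) (.ind χ)) (.const (-1))
  | .ge0 E => E

def labelValue {V : Type} [Fintype V] (G : LGraph V) (u : V) : KForm → ℤ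
  | .atom p => if G.label u p then 1 else 0
  | _ => 0

def atomBound : KForm → ℕ
  | .atom p => p + 1
  | _ => 0

lemma sat_eq_decide_threshold {V : Type} [Fintype V] (G : LGraph V) (u : V) (ψ : KForm) :
    ψ.sat G u = decide (0 ≤ ψ.labelValue G u + ψ.threshold.val G u) := by
  cases ψ with
  | atom p => cases h : G.label u p <;> simp [sat, labelValue, threshold, KExpr.val, h]
  | not ψ => cases h : ψ.sat G u <;> simp [sat, labelValue, threshold, KExpr.val, h]
  | or ψ χ =>
    cases h : ψ.sat G u <;> cases h' : χ.sat G u <;>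
      simp [sat, labelValue, threshold, KExpr.val, h, h']
  | ge0 E => simp [sat, labelValue, threshold]

lemma depth_eq_threshold_depth_add_one (ψ : KForm) : ψ.depth = ψ.threshold.depth + 1 := by
  cases ψ <;> simp [depth, threshold, KExpr.depth]

lemma forms_threshold_subset (ψ : KForm) : ψ.threshold.forms ⊆ ψ.subformulas := by
  cases ψ with
  | atom p => simp [threshold, KExpr.forms]
  | not ψ => simp [threshold, KExpr.forms, subformulas, mem_subformulas_self]
  | or ψ χ =>
    simp [threshold, KExpr.forms, subformulas, mem_subformulas_self, Finset.insert_subset_iff]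
  | ge0 E => exact E.forms_subset_subformulas.trans (by simp [subformulas])

end KForm

namespace GNN

section Tuned

variable (N : GNN) (S : Finset KForm)

noncomputable def inputWidth : ℕ := max N.k (S.sup KForm.atomBound)

lemma lt_inputWidth_of_atom_mem {p : ℕ} (hp : .atom p ∈ S) : p < N.inputWidth S :=
  Nat.lt_of_succ_le ((Finset.le_sup (f := KForm.atomBound) hp).trans (le_max_right _ _))

/-- The inputs are kept; the block `Fin N.d` copies the inputs at layer `0` and then runs
`N.freeze` one layer late; the coordinate of `ψ ∈ S` is the threshold gate of `ψ`. -/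
noncomputable def tunedC :
    ℕ → Fin (N.inputWidth S) ⊕ (Fin N.d ⊕ S) → Fin (N.inputWidth S) ⊕ (Fin N.d ⊕ S) → ℤ
  | _, .inl i, .inl i' => if i = i' then 1 else 0
  | 0, .inl i, .inr (.inl j) => if (i : ℕ) = j ∧ (j : ℕ) < N.k then 1 else 0
  | t + 1, .inr (.inl j), .inr (.inl j') => N.freeze.C t j j'
  | _, .inl i, .inr (.inr ψ) => if ψ.1 = .atom i then 1 else 0
  | _, .inr (.inr χ), .inr (.inr ψ) => ψ.1.threshold.indCoef χ
  | _, _, _ => 0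

noncomputable def tunedA :
    ℕ → Fin (N.inputWidth S) ⊕ (Fin N.d ⊕ S) → Fin (N.inputWidth S) ⊕ (Fin N.d ⊕ S) → ℤ
  | t + 1, .inr (.inl j), .inr (.inl j') => N.freeze.A t j j'
  | _, .inr (.inr χ), .inr (.inr ψ) => ψ.1.threshold.countCoef χ
  | _, _, _ => 0

noncomputable def tunedb : ℕ → Fin (N.inputWidth S) ⊕ (Fin N.d ⊕ S) → ℤ
  | t + 1, .inr (.inl j) => N.freeze.b t j
  | _, .inr (.inr ψ) => ψ.1.threshold.constCoef + 1
  | _, _ => 0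

noncomputable abbrev tuned (L : ℕ) (w : Fin (N.inputWidth S) ⊕ (Fin N.d ⊕ S) → ℤ) : GNN :=
  ofSum (N.inputWidth S) L (N.tunedC S) (N.tunedA S) (N.tunedb S) w

variable {S} {L : ℕ} {w : Fin (N.inputWidth S) ⊕ (Fin N.d ⊕ S) → ℤ} {V : Type} [Fintype V]
  (G : LGraph V)

lemma tuned_state_input (t : ℕ) (u : V) (i : Fin (N.inputWidth S)) :
    (N.tuned S L w).state G t u (sumFinEquiv _ _ (.inl i)) = if G.label u i then 1 else 0 := by
  induction t generalizing u with
  | zero => exact ofSum_state_zero G u (.inl i)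
  | succ t ih =>
    rw [ofSum_state_succ]
    simp only [tunedC, tunedA, tunedb, Fintype.sum_sum_type, Int.cast_ite, Int.cast_one,
      Int.cast_zero, mul_ite, mul_one, mul_zero, Finset.sum_ite_eq', Finset.mem_univ, if_true, ih,
      Finset.sum_const_zero, add_zero]
    split_ifs <;> norm_num [clip]

lemma tuned_state_sim (t : ℕ) (u : V) (j : Fin N.d) :
    (N.tuned S L w).state G (t + 1) u (sumFinEquiv _ _ (.inr (.inl j))) =
      N.freeze.state G t u j := by
  induction t generalizing u j with
  | zero =>
    rw [ofSum_state_succ]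
    simp only [ofSum_state_zero, tunedC, tunedA, tunedb, Fintype.sum_sum_type, Sum.elim_inl,
      Sum.elim_inr, Pi.zero_apply, Int.cast_ite, Int.cast_one, Int.cast_zero, mul_ite, mul_one,
      mul_zero, Finset.sum_const_zero, add_zero]
    by_cases hj : (j : ℕ) < N.k
    · rw [Fintype.sum_eq_single ⟨j, hj.trans_le (le_max_left _ _)⟩ (fun i hi => by
        rw [if_neg (fun h => hi (Fin.ext h.1))])]
      simp only [true_and, hj, if_true, state]
      split_ifs <;> norm_num [clip]
    · simp [hj, clip, state]
  | succ t ih =>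
    rw [ofSum_state_succ]
    simp only [Fintype.sum_sum_type, tunedC, tunedA, tunedb, ih, Int.cast_zero, mul_zero,
      Finset.sum_const_zero, zero_add, add_zero]
    rfl

lemma sum_label_mul_ite_atom (u : V) (ψ : S) :
    ∑ i : Fin (N.inputWidth S), (if G.label u i then 1 else 0 : ℝ)
      * ((if ψ.1 = .atom i then 1 else 0 : ℤ) : ℝ) = ψ.1.labelValue G u := by
  obtain ⟨ψ, hψ⟩ := ψ
  cases ψ with
  | atom p =>
    have hp := N.lt_inputWidth_of_atom_mem S hψ
    rw [Fintype.sum_eq_single ⟨p, hp⟩ (fun i hi => by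
      rw [if_neg (fun h => hi (Fin.ext (KForm.atom.inj h).symm)), Int.cast_zero, mul_zero])]
    simp [KForm.labelValue]
  | _ => simp [KForm.labelValue]

lemma tuned_state_formula (hS : ∀ ψ ∈ S, ψ.threshold.forms ⊆ S) (t : ℕ) :
    ∀ ψ : S, ψ.1.depth ≤ t → ∀ u : V,
      (N.tuned S L w).state G t u (sumFinEquiv _ _ (.inr (.inr ψ))) =
        if ψ.1.sat G u then 1 else 0 := by
  induction t with
  | zero => intro ψ h; have := ψ.1.depth_eq_threshold_depth_add_one; omega
  | succ t ih =>
    intro ψ hψ u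
    have ih_forms : ∀ χ : S, χ.1 ∈ ψ.1.threshold.forms → ∀ v : V,
        (N.tuned S L w).state G t v (sumFinEquiv _ _ (.inr (.inr χ))) =
          if χ.1.sat G v then 1 else 0 := fun χ hχ =>
      ih χ (by
        have := KExpr.depth_le_of_mem_forms hχ
        have := ψ.1.depth_eq_threshold_depth_add_one
        omega)
    have hlin := ψ.1.threshold.sum_linear_eq_val G u (hS ψ ψ.2)
      (fun χ => (N.tuned S L w).state G t u (sumFinEquiv _ _ (.inr (.inr χ))))
      (fun χ => ∑ v ∈ Finset.univ.filter (fun v => G.edge u v = true),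
        (N.tuned S L w).state G t v (sumFinEquiv _ _ (.inr (.inr χ))))
      (fun χ hχ => ih_forms χ hχ u)
      (fun χ hχ => by simp only [ih_forms χ hχ, Finset.sum_boole, Finset.filter_filter])
    rw [ofSum_state_succ]
    simp only [Fintype.sum_sum_type, tunedC, tunedA, tunedb, Int.cast_zero, mul_zero,
      Finset.sum_const_zero, zero_add, tuned_state_input, sum_label_mul_ite_atom]
    calc _ = clip (((ψ.1.labelValue G u + ψ.1.threshold.val G u : ℤ) : ℝ) + 1) := by
          push_cast; congr 1; linarith
      _ = _ := by rw [clip_intCast_add_one, ψ.1.sat_eq_decide_threshold G u]; simp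

end Tuned

variable (N : GNN) (a : Fin N.d → ℤ) (φ : KForm)

noncomputable def tuningCls :
    Fin (N.inputWidth φ.not.subformulas) ⊕ (Fin N.d ⊕ φ.not.subformulas) → ℤ
  | .inl _ => 0
  | .inr (.inl j) => a j
  | .inr (.inr ψ) => if ψ.1 = φ.not then -(1 + ∑ j, |a j|) else 0

noncomputable def tuning : GNN :=
  N.tuned φ.not.subformulas (max N.L φ.not.depth + 1) (N.tuningCls a φ)

lemma sum_mul_state_lt {V : Type} [Fintype V] (G : LGraph V) (t : ℕ) (u : V) :
    ∑ j, (a j : ℝ) * N.state G t u j < 1 + ∑ j, |(a j : ℝ)| := by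
  have : ∑ j, (a j : ℝ) * N.state G t u j ≤ ∑ j, |(a j : ℝ)| := by
    refine Finset.sum_le_sum fun j _ => ?_
    obtain ⟨h0, h1⟩ := N.state_mem_Icc G t u j
    calc (a j : ℝ) * N.state G t u j ≤ |(a j : ℝ)| * N.state G t u j :=
          mul_le_mul_of_nonneg_right (le_abs_self _) h0
      _ ≤ |(a j : ℝ)| := mul_le_of_le_one_right (abs_nonneg _) h1
  linarith

lemma accepts_tuning_iff {V : Type} [Fintype V] (G : LGraph V) (u : V) :
    (N.tuning a φ).accepts G u ↔
      0 ≤ ∑ j, (a j : ℝ) * N.state G N.L u j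
        - (1 + ∑ j, |(a j : ℝ)|) * (if φ.sat G u then 0 else 1) := by
  have hφ : φ.not ∈ φ.not.subformulas := φ.not.mem_subformulas_self
  have hclosed : ∀ ψ ∈ φ.not.subformulas, ψ.threshold.forms ⊆ φ.not.subformulas :=
    fun ψ hψ => ψ.forms_threshold_subset.trans (KForm.subformulas_subset_of_mem hψ)
  have hsim : ∀ j, (N.tuned φ.not.subformulas (max N.L φ.not.depth + 1) (N.tuningCls a φ)).state
      G (max N.L φ.not.depth + 1) u (sumFinEquiv _ _ (.inr (.inl j))) = N.state G N.L u j :=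
    fun j => by rw [tuned_state_sim, state_freeze, min_eq_right (le_max_left _ _)]
  have hnot : (N.tuned φ.not.subformulas (max N.L φ.not.depth + 1) (N.tuningCls a φ)).state
      G (max N.L φ.not.depth + 1) u (sumFinEquiv _ _ (.inr (.inr ⟨φ.not, hφ⟩))) =
        if φ.sat G u then 0 else 1 := by
    rw [tuned_state_formula N G hclosed _ ⟨φ.not, hφ⟩ (Nat.le_succ_of_le (le_max_right _ _))]
    cases h : φ.sat G u <;> simp [KForm.sat, h]
  unfold tuning
  rw [accepts_ofSum_iff]
  simp only [Fintype.sum_sum_type, tuningCls]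
  rw [Fintype.sum_eq_single (⟨φ.not, hφ⟩ : φ.not.subformulas) (fun ψ hψ => by
    rw [if_neg (fun h => hψ (Subtype.ext h)), Int.cast_zero, zero_mul])]
  simp only [hsim, hnot, Int.cast_zero, zero_mul, Finset.sum_const_zero, zero_add, if_true]
  push_cast
  constructor <;> intro h <;> linarith

end GNN

/-- Tuning of a GNN: given a GNN `N` (sum aggregation, integer weights, linear
integer classification) and a `K^#` formula `φ`, there is a GNN `N'` of the same
kind accepting exactly the pointed graphs accepted by `N` that satisfy `φ`. -/
theorem gnn_tuning (N : GNN) (a : Fin N.d → ℤ)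
    (hcls : ∀ x : Fin N.d → ℝ, N.cls x = decide (0 ≤ ∑ i, (a i : ℝ) * x i))
    (φ : KForm) :
    ∃ N' : GNN,
      (∃ a' : Fin N'.d → ℤ,
        ∀ x : Fin N'.d → ℝ, N'.cls x = decide (0 ≤ ∑ i, (a' i : ℝ) * x i)) ∧
      ∀ (V : Type) [Fintype V] (G : LGraph V) (u : V),
        N'.accepts G u ↔ (N.accepts G u ∧ KForm.sat G u φ = true) := by
  refine ⟨N.tuning a φ, ⟨_, fun _ => rfl⟩, fun V _ G u => ?_⟩
  rw [N.accepts_tuning_iff, GNN.accepts, hcls, decide_eq_true_iff]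
  exact sub_mul_ite_nonneg_iff (N.sum_mul_state_lt a G N.L u) _
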